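/- Let x* ∈ ℝⁿ be k-sparse with support S and min_{i∈S} |x_i*| ≥ c‖x*‖₂/√k for a constant c > 0. If x ∈ ℝⁿ satisfies x_i x_i* ≥ 0 and |x_i| ≥ |x_i*|/2 for all i, then D_Φ(x*, x) ≤ (√k/(c‖x*‖₂)) · ‖x_S − x_S*‖₂² + ‖x_{S^c}‖₁. -/

import Mathlib

open Finset
open scoped Classical

/-!
The hypentropy potential is separable, so its Bregman divergence is a sum of scalar divergences
`φ a - φ b - φ' b * (a - b)` with `φ' t = arsinh (t / β)` and `φ'' t = 1 / √(t ^ 2 + β ^ 2) ≤ 1 / |t|`.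
On the support, `x i` and `xs i` have the same sign and `|x i| ≥ |xs i| / 2`, so `φ'` is
`2 / |xs i|`-Lipschitz between them and the scalar divergence is at most `(x i - xs i) ^ 2 / |xs i|`;
the lower bound on `|xs i|` turns `1 / |xs i|` into the stated factor. Off the support the
divergence is `√(x i ^ 2 + β ^ 2) - β ≤ |x i|`.
-/

open Set in
theorem sub_sub_mul_sub_le_of_abs_deriv_sub_le {f f' : ℝ → ℝ} {a b L : ℝ}
    (hf : ∀ t ∈ uIcc a b, HasDerivAt f (f' t) t)
    (hL : ∀ t ∈ uIcc a b, |f' t - f' b| ≤ L * |t - b|) :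
    f a - f b - f' b * (a - b) ≤ L / 2 * (a - b) ^ 2 := by
  set g : ℝ → ℝ := fun t => f t - f' b * t - L / 2 * (t - b) ^ 2
  have hg : ∀ t ∈ uIcc a b, HasDerivAt g (f' t - f' b - L * (t - b)) t := fun t ht =>
    (((hf t ht).fun_sub ((hasDerivAt_id' t).const_mul (f' b))).fun_sub
      ((((hasDerivAt_id' t).sub_const b).fun_pow 2).const_mul (L / 2))).congr_deriv (by ring)
  have hcont : ContinuousOn g (uIcc a b) := fun t ht => (hg t ht).continuousAt.continuousWithinAt
  have hg' : ∀ t ∈ interior (uIcc a b),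
      HasDerivWithinAt g (f' t - f' b - L * (t - b)) (interior (uIcc a b)) t :=
    fun t ht => (hg t (interior_subset ht)).hasDerivWithinAt
  suffices g a ≤ g b by simp only [g] at this; linarith
  rcases le_total b a with hba | hab
  · rw [uIcc_of_ge hba] at hL hcont hg'
    refine antitoneOn_of_hasDerivWithinAt_nonpos (convex_Icc b a) hcont hg' (fun t ht => ?_)
      (left_mem_Icc.2 hba) (right_mem_Icc.2 hba) hba
    have ht := interior_subset ht
    have := (abs_le.1 (hL t ht)).2
    rw [abs_of_nonneg (sub_nonneg.2 ht.1)] at this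
    linarith
  · rw [uIcc_of_le hab] at hL hcont hg'
    refine monotoneOn_of_hasDerivWithinAt_nonneg (convex_Icc a b) hcont hg' (fun t ht => ?_)
      (left_mem_Icc.2 hab) (right_mem_Icc.2 hab) hab
    have ht := interior_subset ht
    have := (abs_le.1 (hL t ht)).1
    rw [abs_of_nonpos (sub_nonpos.2 ht.2)] at this
    linarith

theorem min_abs_le_abs_of_mem_uIcc {a b s : ℝ} (hab : 0 ≤ a * b) (hs : s ∈ Set.uIcc a b) :
    min |a| |b| ≤ |s| := by
  rcases Set.mem_uIcc.1 hs with ⟨h₁, h₂⟩ | ⟨h₁, h₂⟩ <;>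
  rcases le_total 0 a with ha | ha <;> rcases le_total 0 b with hb | hb <;>
  rcases le_total 0 s with hs | hs <;>
  simp only [abs_of_nonneg, abs_of_nonpos, ha, hb, hs, min_le_iff] <;> by_contra! h <;> nlinarith

theorem fderiv_sum_comp_apply {ι : Type*} [Fintype ι] {φ φ' : ℝ → ℝ} {x : ι → ℝ}
    (hφ : ∀ i, HasDerivAt φ (φ' (x i)) (x i)) (v : ι → ℝ) :
    fderiv ℝ (fun y : ι → ℝ => ∑ i, φ (y i)) x v = ∑ i, φ' (x i) * v i := by
  have H : HasFDerivAt (fun y : ι → ℝ => ∑ i, φ (y i))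
      (∑ i, φ' (x i) • ContinuousLinearMap.proj (R := ℝ) (φ := fun _ : ι => ℝ) i) x :=
    HasFDerivAt.fun_sum fun i _ => (hφ i).comp_hasFDerivAt x (hasFDerivAt_apply i x)
  simp [H.fderiv]

namespace Real

theorem sqrt_sq_add_sq_le_abs_add {t β : ℝ} (hβ : 0 ≤ β) : √(t ^ 2 + β ^ 2) ≤ |t| + β :=
  sqrt_le_iff.2 ⟨by positivity, by nlinarith [sq_abs t, abs_nonneg t]⟩

theorem hasDerivAt_arsinh_div {β : ℝ} (hβ : 0 < β) (t : ℝ) :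
    HasDerivAt (fun s => arsinh (s / β)) (√(t ^ 2 + β ^ 2))⁻¹ t := by
  refine ((hasDerivAt_arsinh _).comp t ((hasDerivAt_id' t).div_const β)).congr_deriv ?_
  rw [show 1 + (t / β) ^ 2 = (t ^ 2 + β ^ 2) / β ^ 2 by field_simp; ring,
    sqrt_div' _ (sq_nonneg β), sqrt_sq hβ.le]
  field_simp

noncomputable def hypentropy (β t : ℝ) : ℝ := t * arsinh (t / β) - √(t ^ 2 + β ^ 2)

theorem hasDerivAt_hypentropy {β : ℝ} (hβ : 0 < β) (t : ℝ) :
    HasDerivAt (hypentropy β) (arsinh (t / β)) t := by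
  have hpos : 0 < t ^ 2 + β ^ 2 := by positivity
  refine ((hasDerivAt_id' t).mul (hasDerivAt_arsinh_div hβ t) |>.sub
    (((hasDerivAt_pow 2 t).add_const (β ^ 2)).sqrt hpos.ne')).congr_deriv ?_
  field_simp
  ring

theorem hypentropy_bregman_le {β a b : ℝ} (hβ : 0 < β) (ha : a ≠ 0) (hab : 0 ≤ a * b)
    (hb : |a| / 2 ≤ |b|) :
    hypentropy β a - hypentropy β b - arsinh (b / β) * (a - b) ≤ (b - a) ^ 2 / |a| := by
  have hderiv : ∀ s ∈ Set.uIcc a b, ‖(√(s ^ 2 + β ^ 2))⁻¹‖ ≤ 2 / |a| := fun s hs => by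
    have hs : |a| / 2 ≤ |s| :=
      (le_min (half_le_self (abs_nonneg a)) hb).trans (min_abs_le_abs_of_mem_uIcc hab hs)
    have ha' : 0 < |a| / 2 := by positivity
    calc ‖(√(s ^ 2 + β ^ 2))⁻¹‖ = (√(s ^ 2 + β ^ 2))⁻¹ := norm_of_nonneg (by positivity)
      _ ≤ |s|⁻¹ := inv_anti₀ (ha'.trans_le hs) (abs_le_sqrt (by nlinarith))
      _ ≤ (|a| / 2)⁻¹ := inv_anti₀ ha' hs
      _ = 2 / |a| := by rw [inv_div]
  have hL : ∀ t ∈ Set.uIcc a b, |arsinh (t / β) - arsinh (b / β)| ≤ 2 / |a| * |t - b| :=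
    fun t ht => (convex_uIcc a b).norm_image_sub_le_of_norm_hasDerivWithin_le
      (fun s _ => (hasDerivAt_arsinh_div hβ s).hasDerivWithinAt) hderiv Set.right_mem_uIcc ht
  calc _ ≤ 2 / |a| / 2 * (a - b) ^ 2 :=
        sub_sub_mul_sub_le_of_abs_deriv_sub_le (fun t _ => hasDerivAt_hypentropy hβ t) hL
    _ = (b - a) ^ 2 / |a| := by ring

theorem hypentropy_bregman_zero_le {β : ℝ} (hβ : 0 < β) (b : ℝ) :
    hypentropy β 0 - hypentropy β b - arsinh (b / β) * (0 - b) ≤ |b| := by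
  simp only [hypentropy, zero_mul, zero_div, arsinh_zero, zero_sub, zero_pow two_ne_zero, zero_add,
    sqrt_sq hβ.le]
  linarith [sqrt_sq_add_sq_le_abs_add (t := b) hβ.le]

end Real

open Real

/-- Upper bound on the Bregman divergence of the hypentropy mirror map for
vectors with matched signs and coordinates at least half the signal size. -/
theorem hypentropy_bregman_upper_bound (n k : ℕ) (β c : ℝ) (hβ : 0 < β) (hc : 0 < c)
    (Φ : (Fin n → ℝ) → ℝ)
    (hΦ : ∀ y : Fin n → ℝ,
      Φ y = ∑ i, (y i * Real.arsinh (y i / β) - Real.sqrt ((y i) ^ 2 + β ^ 2)))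
    (xs : Fin n → ℝ)
    (S : Finset (Fin n)) (hS : S = Finset.univ.filter fun i => xs i ≠ 0)
    (hk : S.card ≤ k)
    (hmin : ∀ i ∈ S, c / Real.sqrt k * Real.sqrt (∑ l, (xs l) ^ 2) ≤ |xs i|)
    (x : Fin n → ℝ)
    (hsign : ∀ i, 0 ≤ x i * xs i)
    (hhalf : ∀ i, |xs i| / 2 ≤ |x i|) :
    Φ xs - Φ x - fderiv ℝ Φ x (fun i => xs i - x i) ≤
      Real.sqrt k / (c * Real.sqrt (∑ l, (xs l) ^ 2)) * ∑ i ∈ S, (x i - xs i) ^ 2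
        + ∑ i ∈ Sᶜ, |x i| := by
  obtain rfl : Φ = fun y => ∑ i, hypentropy β (y i) := funext hΦ
  rw [fderiv_sum_comp_apply (φ' := fun t => arsinh (t / β))
      fun i => hasDerivAt_hypentropy hβ (x i),
    ← sum_sub_distrib, ← sum_sub_distrib, ← sum_add_sum_compl S, mul_sum]
  refine add_le_add (sum_le_sum fun i hi => ?_) (sum_le_sum fun i hi => ?_)
  · have hxs : xs i ≠ 0 := by simpa [hS] using hi
    have hN : 0 < √(∑ l, xs l ^ 2) := (abs_pos.2 hxs).trans_le
      (abs_le_sqrt (single_le_sum (fun l _ => sq_nonneg (xs l)) (mem_univ i)))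
    have hsqrtk : 0 < √k := sqrt_pos.2 (by exact_mod_cast (card_pos.2 ⟨i, hi⟩).trans_le hk)
    have hM : 0 < c / √k * √(∑ l, xs l ^ 2) := by positivity
    calc _ ≤ (x i - xs i) ^ 2 / |xs i| :=
          hypentropy_bregman_le hβ hxs (mul_comm (x i) _ ▸ hsign i) (hhalf i)
      _ ≤ (x i - xs i) ^ 2 / (c / √k * √(∑ l, xs l ^ 2)) := by gcongr; exact hmin i hi
      _ = _ := by field_simp
  · have hxs : xs i = 0 := by simpa [hS] using hi
    simpa [hxs] using hypentropy_bregman_zero_le hβ (x i)
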